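/- Let c be a Coxeter element in the Weyl group of an affine root system of rank n. Then c, acting on V, has a linearly independent set of n−2 eigenvectors whose eigenvalues are roots of unity different from 1. -/

import Mathlib

open scoped BigOperators

noncomputable section

/-- A symmetrizable generalized Cartan matrix of affine type, together with the
coefficient vector `dz` of the primitive positive imaginary root `δ` spanning the
(one dimensional) kernel of the associated symmetric bilinear form. -/
structure AffineGCM (n : ℕ) where
  /-- the generalized Cartan matrix -/
  a : Matrix (Fin n) (Fin n) ℤ
  /-- symmetrizing factors -/
  d : Fin n → ℝ
  diag : ∀ i, a i i = 2
  offdiag : ∀ i j, i ≠ j → a i j ≤ 0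
  d_pos : ∀ i, 0 < d i
  symmetrizable : ∀ i j, d i * (a i j : ℝ) = d j * (a j i : ℝ)
  /-- `K` is positive semidefinite (on the real span of the simple roots) -/
  posSemidef : ∀ g : Fin n → ℝ, 0 ≤ ∑ i, ∑ j, g i * g j * (d i * (a i j : ℝ))
  /-- `K` is not positive definite -/
  not_posDef : ∃ g : Fin n → ℝ, g ≠ 0 ∧ ∑ i, ∑ j, g i * g j * (d i * (a i j : ℝ)) = 0
  /-- the restriction of `K` to the span of every proper subset of the simple roots
  is positive definite -/
  proper_posDef : ∀ J : Finset (Fin n), J ≠ Finset.univ →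
    ∀ g : Fin n → ℝ, (∀ i, i ∉ J → g i = 0) → g ≠ 0 →
      0 < ∑ i, ∑ j, g i * g j * (d i * (a i j : ℝ))
  /-- coordinates of the positive imaginary root `δ` in the basis of simple roots -/
  dz : Fin n → ℤ
  dz_pos : ∀ i, 0 < dz i
  /-- `δ` is the imaginary root closest to the origin: its coordinates are coprime -/
  dz_prim : Finset.univ.gcd dz = 1
  /-- `δ` spans the kernel of `K` -/
  dz_ker : ∀ j, ∑ i, (dz i : ℝ) * (d i * (a i j : ℝ)) = 0

namespace AffineGCM

variable {n : ℕ}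

/-- The ambient vector space `V`, with the simple roots as standard basis. -/
abbrev V (n : ℕ) := Fin n → ℂ

/-- the simple root `α i` (the `i`-th standard basis vector) -/
def α (i : Fin n) : V n := Pi.single i 1

/-- a vector is *positive* if it lies in the nonnegative real span of the simple roots -/
def IsPosRoot (v : V n) : Prop := ∀ i, 0 ≤ (v i).re ∧ (v i).im = 0

/-- a vector is *negative* if it lies in the nonpositive real span of the simple roots -/
def IsNegRoot (v : V n) : Prop := ∀ i, (v i).re ≤ 0 ∧ (v i).im = 0

/-- the `g`-orbit of `x`: all `g ^ k • x` for integers `k` -/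
def orbit (g : V n ≃ₗ[ℂ] V n) (x : V n) : Set (V n) := Set.range fun k : ℤ => (g ^ k) x

/-- `U g`: the span of all eigenvectors of `g`, i.e. the direct sum of its eigenspaces -/
def eigSpan (g : V n ≃ₗ[ℂ] V n) : Submodule ℂ (V n) :=
  ⨆ μ : ℂ, Module.End.eigenspace (g : Module.End ℂ (V n)) μ

/-- the span `V_fin` of the simple roots other than `α aff` -/
def Vfin (aff : Fin n) : Submodule ℂ (V n) :=
  Submodule.span ℂ (α '' {i : Fin n | i ≠ aff})

variable (C : AffineGCM n)

/-- the simple coroot `α i ^ ∨ = (d i)⁻¹ • α i` -/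
def coroot (i : Fin n) : V n := ((C.d i : ℂ))⁻¹ • α i

/-- The symmetric bilinear form `K`, determined by `K (coroot i) (α j) = a i j`,
that is, `K (α i) (α j) = d i * a i j`. -/
def K : V n →ₗ[ℂ] V n →ₗ[ℂ] ℂ :=
  LinearMap.mk₂ ℂ
    (fun x y => ∑ i, ∑ j, x i * y j * ((C.d i : ℂ) * (C.a i j : ℂ)))
    (fun x x' y => by
      simp only [Pi.add_apply, add_mul, Finset.sum_add_distrib])
    (fun r x y => by
      simp only [Pi.smul_apply, smul_eq_mul, Finset.mul_sum]
      exact Finset.sum_congr rfl fun i _ => Finset.sum_congr rfl fun j _ => by ring)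
    (fun x y y' => by
      simp only [Pi.add_apply, mul_add, add_mul, Finset.sum_add_distrib])
    (fun r x y => by
      simp only [Pi.smul_apply, smul_eq_mul, Finset.mul_sum]
      exact Finset.sum_congr rfl fun i _ => Finset.sum_congr rfl fun j _ => by ring)

/-- the linear map `v ↦ v - K x v • y`; reflections are special cases -/
def reflMap (x y : V n) : V n →ₗ[ℂ] V n where
  toFun v := v - C.K x v • y
  map_add' u v := by simp only [map_add, add_smul]; abel
  map_smul' r u := by simp only [map_smul, smul_eq_mul, RingHom.id_apply, smul_sub, smul_smul]

lemma reflMap_apply (x y v : V n) : C.reflMap x y v = v - C.K x v • y := rfl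

/-- the simple reflection `s i` as a linear endomorphism -/
def sLin (i : Fin n) : V n →ₗ[ℂ] V n := C.reflMap (C.coroot i) (α i)

lemma K_α_α (i j : Fin n) : C.K (α i) (α j) = (C.d i : ℂ) * (C.a i j : ℂ) := by
  simp [K, α, LinearMap.mk₂_apply, Pi.single_apply, ite_mul, zero_mul,
    Finset.sum_ite_eq', Finset.mem_univ]

lemma K_coroot_α (i j : Fin n) : C.K (C.coroot i) (α j) = (C.a i j : ℂ) := by
  have hd : (C.d i : ℂ) ≠ 0 := by exact_mod_cast ne_of_gt (C.d_pos i)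
  simp only [coroot, map_smul, LinearMap.smul_apply, smul_eq_mul, K_α_α]
  field_simp

lemma sLin_invol (i : Fin n) (v : V n) : C.sLin i (C.sLin i v) = v := by
  have h2 : C.K (C.coroot i) (α i) = 2 := by
    rw [K_coroot_α, C.diag]; norm_num
  simp only [sLin, reflMap_apply, map_sub, map_smul, h2, smul_eq_mul]
  module

/-- the simple reflection `s i` -/
def s (i : Fin n) : V n ≃ₗ[ℂ] V n :=
  LinearEquiv.ofLinear (C.sLin i) (C.sLin i)
    (LinearMap.ext fun v => C.sLin_invol i v) (LinearMap.ext fun v => C.sLin_invol i v)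

/-- the Weyl group `W`, as a subgroup of the group of linear automorphisms of `V` -/
def Wgroup : Subgroup (V n ≃ₗ[ℂ] V n) := Subgroup.closure (Set.range C.s)

/-- the Coxeter element `c = s 1 * s 2 * ⋯ * s n` -/
def cox : V n ≃ₗ[ℂ] V n := (List.ofFn C.s).prod

/-- the positive imaginary root `δ` -/
def δv : V n := fun i => ((C.dz i : ℤ) : ℂ)

/-- the set of real roots: `W`-images of the simple roots -/
def realRoots : Set (V n) := {v | ∃ w ∈ C.Wgroup, ∃ i, w (α i) = v}

/-- the root system `Φ`: real roots together with the imaginary roots `k • δ`, `k ≠ 0` -/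
def Φ : Set (V n) := C.realRoots ∪ {v | ∃ k : ℤ, k ≠ 0 ∧ v = (k : ℂ) • C.δv}

/-- `T→ = {α 1, s 1 α 2, …, s 1 ⋯ s (n-1) α n}` -/
def Tproj : Set (V n) :=
  Set.range fun k : Fin n => ((List.ofFn C.s).take k.val).prod (α k)

/-- `T← = {α n, s n α (n-1), …, s n ⋯ s 2 α 1}` -/
def Tinj : Set (V n) :=
  Set.range fun k : Fin n => ((List.ofFn C.s).reverse.take (n - 1 - k.val)).prod (α k)

/-- `Φ_fin`, the finite root system `Φ ∩ V_fin` -/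
def Φfin (aff : Fin n) : Set (V n) := C.Φ ∩ (Vfin aff : Set (V n))

/-- the root `θ = δ - [δ : α aff] • α aff` of `Φ_fin` -/
def θv (aff : Fin n) : V n := C.δv - ((C.dz aff : ℤ) : ℂ) • α aff

/-- the reflection `t β : v ↦ v - K (β^∨) v • β` in a (real) root `β`,
where `β^∨ = (2 / K β β) • β` -/
def tRefl (β : V n) : V n →ₗ[ℂ] V n := C.reflMap ((2 / C.K β β) • β) β

/-- `c_◁ = s 1 * ⋯ * s (aff - 1)` -/
def cleft (aff : Fin n) : V n →ₗ[ℂ] V n := ((List.ofFn C.sLin).take aff.val).prod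

/-- `c_▷ = s (aff + 1) * ⋯ * s n` -/
def cright (aff : Fin n) : V n →ₗ[ℂ] V n := ((List.ofFn C.sLin).drop (aff.val + 1)).prod

/-- `Υ^fin = Φ_fin ∩ U c` -/
def Υfin (aff : Fin n) : Set (V n) := C.Φfin aff ∩ (eigSpan C.cox : Set (V n))

/-- `B` is a simple system for a set `Θ` of roots: a linearly independent subset of `Θ`
such that every element of `Θ` is a nonnegative or a nonpositive combination of `B`. -/
def IsSimpleSystem (Θ : Set (V n)) (B : Finset (V n)) : Prop :=
  ↑B ⊆ Θ ∧ LinearIndependent ℂ (fun b : B => (b : V n)) ∧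
    ∀ v ∈ Θ, ∃ g : V n → ℝ, ((∀ b ∈ B, 0 ≤ g b) ∨ (∀ b ∈ B, g b ≤ 0)) ∧
      v = ∑ b ∈ B, (g b : ℂ) • b

/-- two roots of `Θ` are connected if they are joined by a chain of roots of `Θ`
that are pairwise non-orthogonal (with respect to `K`) -/
def Connected (Θ : Set (V n)) (x y : V n) : Prop :=
  Relation.ReflTransGen (fun u v => u ∈ Θ ∧ v ∈ Θ ∧ C.K u v ≠ 0) x y

/-- the irreducible component of `x` in `Θ` -/
def component (Θ : Set (V n)) (x : V n) : Set (V n) := {y | y ∈ Θ ∧ C.Connected Θ x y}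

/-- a set of roots is of finite type `A` if it consists exactly of the vectors
`±(β i + β (i+1) + ⋯ + β j)` for a linearly independent family `β 1, …, β k` -/
def IsTypeA (Θ : Set (V n)) : Prop :=
  ∃ (k : ℕ) (β : Fin k → V n), LinearIndependent ℂ β ∧ (∀ i, β i ∈ Θ) ∧
    Θ = {v | ∃ i j : Fin k, i ≤ j ∧
      (v = ∑ l ∈ Finset.Icc i j, β l ∨ v = -∑ l ∈ Finset.Icc i j, β l)}

/-- `Ω = {β 1, t (β 1) (β 2), …, t (β 1) ⋯ t (β (m-1)) (β m)}` for an ordered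
tuple `β` of roots -/
def Ωset {m : ℕ} (β : Fin m → V n) : Set (V n) :=
  Set.range fun j : Fin m => (((List.ofFn fun i => C.tRefl (β i)).take j.val).prod) (β j)

/-- `s i` is initial in a Coxeter element `c` if `c` is the product of a permutation
of all the simple reflections starting with `s i` -/
def IsInitial (i : Fin n) (c : V n ≃ₗ[ℂ] V n) : Prop :=
  ∃ l : List (Fin n), (i :: l).Perm (List.finRange n) ∧ ((i :: l).map C.s).prod = c

/-- `s i` is final in a Coxeter element `c` if `c` is the product of a permutation
of all the simple reflections ending with `s i` -/
def IsFinal (i : Fin n) (c : V n ≃ₗ[ℂ] V n) : Prop :=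
  ∃ l : List (Fin n), (l ++ [i]).Perm (List.finRange n) ∧ ((l ++ [i]).map C.s).prod = c

/-- the skew-symmetric bilinear form `ω_c`, determined by
`ω_c (coroot i) (α j) = a i j` if `i > j`, `= 0` if `i = j`, `= -a i j` if `i < j` -/
def ω : V n →ₗ[ℂ] V n →ₗ[ℂ] ℂ :=
  LinearMap.mk₂ ℂ
    (fun x y => ∑ i, ∑ j, x i * y j *
      ((if j < i then 1 else if i = j then 0 else -1) * ((C.d i : ℂ) * (C.a i j : ℂ))))
    (fun x x' y => by
      simp only [Pi.add_apply, add_mul, Finset.sum_add_distrib])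
    (fun r x y => by
      simp only [Pi.smul_apply, smul_eq_mul, Finset.mul_sum]
      exact Finset.sum_congr rfl fun i _ => Finset.sum_congr rfl fun j _ => by ring)
    (fun x y y' => by
      simp only [Pi.add_apply, mul_add, add_mul, Finset.sum_add_distrib])
    (fun r x y => by
      simp only [Pi.smul_apply, smul_eq_mul, Finset.mul_sum]
      exact Finset.sum_congr rfl fun i _ => Finset.sum_congr rfl fun j _ => by ring)

end AffineGCM

/-!
The Coxeter element `c` preserves the hermitian form `H (x, y) = K (x̄, y)`, which is positive
semidefinite with radical `ℂ δ`, and the vectors fixed by `c` are exactly the multiples of `δ`.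
Hence `(c - 1) ^ 2` has a kernel of dimension at most `2`, and its range `W` does not contain `δ`
(otherwise `c` would have a Jordan block `u ↦ u + δ` with `u` isotropic for `H`). So `H` is
positive definite on `W`, and `c` maps the finitely many lattice points of `W` of a given
`H`-length to each other; as `W` is spanned by lattice points, `c` has finite order on `W`.
A complex operator of finite order is diagonalizable with roots of unity as eigenvalues, and `1` is
not one of them on `W` since `δ ∉ W`.
-/

open Module

theorem LinearMap.finrank_ker_comp_le {K V₁ V₂ V₃ : Type*} [Field K] [AddCommGroup V₁]
    [Module K V₁] [AddCommGroup V₂] [Module K V₂] [AddCommGroup V₃] [Module K V₃]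
    [FiniteDimensional K V₁] [FiniteDimensional K V₂] (f : V₂ →ₗ[K] V₃) (g : V₁ →ₗ[K] V₂) :
    finrank K (ker (f ∘ₗ g)) ≤ finrank K (ker f) + finrank K (ker g) := by
  set φ := g.domRestrict (ker (f ∘ₗ g))
  have hrange : range φ ≤ ker f := by
    rintro _ ⟨x, rfl⟩
    exact x.2
  have hker : (ker φ).map (ker (f ∘ₗ g)).subtype ≤ ker g := by
    rintro _ ⟨x, hx, rfl⟩
    exact hx
  have := φ.finrank_range_add_finrank_ker
  have := Submodule.finrank_mono hrange
  have := Submodule.finrank_mono hker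
  rw [Submodule.finrank_map_subtype_eq] at this
  omega

theorem Module.End.iSup_eigenspace_eq_top_of_pow_eq_one {K M : Type*} [Field K] [IsAlgClosed K]
    [AddCommGroup M] [Module K M] [FiniteDimensional K M] {f : End K M} {m : ℕ}
    (hm : (m : K) ≠ 0) (hf : f ^ m = 1) : ⨆ μ : K, f.eigenspace μ = ⊤ := by
  refine (isSemisimple_of_squarefree_aeval_eq_zero
    (Polynomial.X_pow_sub_one_separable_iff.mpr hm).squarefree ?_).iSup_eigenspace_eq_top
  simp [hf]

theorem Module.End.HasEigenvector.pow_eq_one {K M : Type*} [Field K] [AddCommGroup M] [Module K M]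
    {f : End K M} {μ : K} {x : M} (hx : f.HasEigenvector μ x) {m : ℕ} (hf : f ^ m = 1) :
    μ ^ m = 1 := by
  have h := hx.pow_apply m
  rw [hf, Module.End.one_apply] at h
  exact (smul_left_injective K hx.2 (h.symm.trans (one_smul K x).symm))

theorem exists_pos_mul_norm_sq_le {𝕜 E : Type*} [RCLike 𝕜] [NormedAddCommGroup E]
    [NormedSpace 𝕜 E] [FiniteDimensional 𝕜 E] {q : E → ℝ} (hq : Continuous q)
    (hsmul : ∀ (z : 𝕜) v, q (z • v) = ‖z‖ ^ 2 * q v) (hpos : ∀ v, v ≠ 0 → 0 < q v) :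
    ∃ ε > 0, ∀ v, ε * ‖v‖ ^ 2 ≤ q v := by
  have := FiniteDimensional.proper_rclike 𝕜 E
  have hq0 : q 0 = 0 := by simpa using hsmul 0 0
  rcases subsingleton_or_nontrivial E with hE | hE
  · exact ⟨1, one_pos, fun v => by simp [Subsingleton.elim v 0, hq0]⟩
  obtain ⟨v₀, hv₀, hmin⟩ := (isCompact_sphere (0 : E) 1).exists_isMinOn
    (Set.nonempty_coe_sort.mp (NormedSpace.sphere_nonempty_rclike 𝕜 zero_le_one)) hq.continuousOn
  have hv₀1 : ‖v₀‖ = 1 := mem_sphere_zero_iff_norm.mp hv₀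
  refine ⟨q v₀, hpos v₀ (norm_ne_zero_iff.mp (by simp [hv₀1])), fun v => ?_⟩
  rcases eq_or_ne v 0 with rfl | hv
  · simp [hq0]
  have hnv : ‖v‖ ≠ 0 := norm_ne_zero_iff.mpr hv
  have hu : ((‖v‖⁻¹ : ℝ) : 𝕜) • v ∈ Metric.sphere (0 : E) 1 := by
    simp [norm_smul, hnv]
  have := hmin hu
  rw [Set.mem_ofPred_eq, hsmul] at this
  simp only [RCLike.norm_ofReal, abs_inv, abs_norm, inv_pow] at this
  rwa [le_inv_mul_iff₀ (by positivity), mul_comm] at this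

theorem exists_pow_eqOn_span_of_finite_orbits {R M ι : Type*} [Semiring R] [AddCommMonoid M]
    [Module R M] [Finite ι] {f : Module.End R M} (hf : Function.Injective f) (y : ι → M)
    (hy : ∀ i, (Set.range fun k : ℕ => (f ^ k) (y i)).Finite) :
    ∃ m, 0 < m ∧ ∀ x ∈ Submodule.span R (Set.range y), (f ^ m) x = x := by
  obtain ⟨k, l, hkl, hyl⟩ := (Set.Finite.pi hy).exists_lt_map_eq_of_forall_mem
    (f := fun k i => (f ^ k) (y i)) fun k i _ => ⟨k, rfl⟩
  have hinj : Function.Injective (f ^ k) := by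
    rw [Module.End.coe_pow]; exact hf.iterate k
  refine ⟨l - k, by omega, fun x hx => ?_⟩
  refine LinearMap.eqOn_span (g := 1) ?_ hx
  rintro _ ⟨i, rfl⟩
  apply hinj
  rw [Module.End.one_apply, ← Module.End.mul_apply, ← pow_add, Nat.add_sub_cancel' hkl.le]
  exact (congrFun hyl i).symm

namespace AffineGCM

open Submodule
open scoped Matrix

variable {n : ℕ} (C : AffineGCM n)

def symmMatrix : Matrix (Fin n) (Fin n) ℝ := Matrix.of fun i j => C.d i * C.a i j

def dzR : Fin n → ℝ := fun i => C.dz i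

lemma sum_sum_eq_dotProduct_mulVec (g : Fin n → ℝ) :
    ∑ i, ∑ j, g i * g j * (C.d i * (C.a i j : ℝ)) = g ⬝ᵥ C.symmMatrix *ᵥ g := by
  simp only [dotProduct, Matrix.mulVec, symmMatrix, Matrix.of_apply, Finset.mul_sum]
  exact Finset.sum_congr rfl fun i _ => Finset.sum_congr rfl fun j _ => by ring

lemma symmMatrix_transpose : C.symmMatrixᵀ = C.symmMatrix :=
  Matrix.ext fun i j => (C.symmetrizable j i)

lemma dzR_vecMul_symmMatrix : C.dzR ᵥ* C.symmMatrix = 0 :=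
  funext fun j => C.dz_ker j

lemma symmMatrix_mulVec_dzR : C.symmMatrix *ᵥ C.dzR = 0 := by
  rw [← C.symmMatrix_transpose, Matrix.mulVec_transpose, dzR_vecMul_symmMatrix]

lemma eq_smul_dzR_of_dotProduct_mulVec_eq_zero {x : Fin n → ℝ}
    (hx : x ⬝ᵥ C.symmMatrix *ᵥ x = 0) : ∃ t : ℝ, x = t • C.dzR := by
  rcases isEmpty_or_nonempty (Fin n) with hn | ⟨⟨i₀⟩⟩
  · exact ⟨0, Subsingleton.elim _ _⟩
  have hdz : C.dzR i₀ ≠ 0 := by simpa [dzR] using (C.dz_pos i₀).ne'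
  refine ⟨x i₀ / C.dzR i₀, sub_eq_zero.mp (by_contra fun hw => ?_)⟩
  set w := x - (x i₀ / C.dzR i₀) • C.dzR
  -- `δ` is in the radical, so `w` is isotropic; it vanishes at `i₀`, so it is supported on a
  -- proper subset of the simple roots, where the form is definite.
  have hw0 : w ⬝ᵥ C.symmMatrix *ᵥ w = 0 := by
    rw [Matrix.mulVec_sub, Matrix.mulVec_smul, symmMatrix_mulVec_dzR, smul_zero, sub_zero,
      sub_dotProduct, smul_dotProduct, Matrix.dotProduct_mulVec C.dzR, dzR_vecMul_symmMatrix,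
      zero_dotProduct, smul_zero, sub_zero, hx]
  have hsupp : ∀ i, i ∉ Finset.univ.erase i₀ → w i = 0 := by
    intro i hi
    obtain rfl : i = i₀ := by simpa using hi
    simp [w, div_mul_cancel₀ _ hdz]
  have hpos := C.proper_posDef _ (Finset.erase_ssubset (Finset.mem_univ i₀)).ne w hsupp hw
  rw [sum_sum_eq_dotProduct_mulVec, hw0] at hpos
  exact hpos.false

lemma K_apply (x y : V n) :
    C.K x y = ∑ i, ∑ j, x i * y j * ((C.d i : ℂ) * (C.a i j : ℂ)) := rfl

lemma K_comm (x y : V n) : C.K x y = C.K y x := by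
  rw [K_apply, K_apply, Finset.sum_comm]
  refine Finset.sum_congr rfl fun j _ => Finset.sum_congr rfl fun i _ => ?_
  have := congrArg ((↑) : ℝ → ℂ) (C.symmetrizable i j)
  push_cast at this
  rw [this]; ring

lemma K_star (x y : V n) : C.K (star x) (star y) = star (C.K x y) := by
  simp [K_apply, star_sum]

def H (x y : V n) : ℂ := C.K (star x) y

lemma re_H_self (v : V n) :
    (C.H v v).re = (fun i => (v i).re) ⬝ᵥ C.symmMatrix *ᵥ (fun i => (v i).re) +
      (fun i => (v i).im) ⬝ᵥ C.symmMatrix *ᵥ (fun i => (v i).im) := by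
  rw [← sum_sum_eq_dotProduct_mulVec, ← sum_sum_eq_dotProduct_mulVec, H, K_apply,
    Complex.re_sum, ← Finset.sum_add_distrib]
  refine Finset.sum_congr rfl fun i _ => ?_
  rw [Complex.re_sum, ← Finset.sum_add_distrib]
  refine Finset.sum_congr rfl fun j _ => ?_
  simp [Complex.mul_re, Complex.mul_im]
  ring

lemma re_H_self_nonneg (v : V n) : 0 ≤ (C.H v v).re := by
  rw [re_H_self, ← sum_sum_eq_dotProduct_mulVec, ← sum_sum_eq_dotProduct_mulVec]
  exact add_nonneg (C.posSemidef _) (C.posSemidef _)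

lemma mem_span_δv_of_re_H_self_eq_zero {v : V n} (hv : (C.H v v).re = 0) : v ∈ ℂ ∙ C.δv := by
  have hnn (g : Fin n → ℝ) : 0 ≤ g ⬝ᵥ C.symmMatrix *ᵥ g := by
    rw [← sum_sum_eq_dotProduct_mulVec]; exact C.posSemidef g
  rw [re_H_self] at hv
  obtain ⟨t, ht⟩ := C.eq_smul_dzR_of_dotProduct_mulVec_eq_zero (x := fun i => (v i).re)
    (le_antisymm (by linarith [hnn fun i => (v i).im]) (hnn _))
  obtain ⟨s, hs⟩ := C.eq_smul_dzR_of_dotProduct_mulVec_eq_zero (x := fun i => (v i).im)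
    (le_antisymm (by linarith [hnn fun i => (v i).re]) (hnn _))
  refine mem_span_singleton.mpr ⟨⟨t, s⟩, funext fun i => Complex.ext ?_ ?_⟩
  · simpa [δv, dzR] using (congrFun ht i).symm
  · simpa [δv, dzR] using (congrFun hs i).symm

lemma K_δv_left (y : V n) : C.K C.δv y = 0 := by
  rw [K_apply, Finset.sum_comm]
  refine Finset.sum_eq_zero fun j _ => ?_
  have := congrArg ((↑) : ℝ → ℂ) (C.dz_ker j)
  push_cast at this
  simp only [δv, mul_right_comm _ (y j), ← Finset.sum_mul, this, zero_mul]

lemma K_δv_right (x : V n) : C.K x C.δv = 0 := by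
  rw [K_comm, K_δv_left]

lemma star_δv : star C.δv = C.δv := funext fun i => by simp [δv]

lemma δv_ne_zero : C.δv ≠ 0 := by
  obtain ⟨g, hg, -⟩ := C.not_posDef
  obtain ⟨i, -⟩ := Function.ne_iff.mp hg
  intro h
  have : (C.dz i : ℂ) = 0 := congrFun h i
  exact (C.dz_pos i).ne' (by exact_mod_cast this)

lemma α_eq_smul_coroot (i : Fin n) : α i = (C.d i : ℂ) • C.coroot i := by
  have hd : (C.d i : ℂ) ≠ 0 := by exact_mod_cast (C.d_pos i).ne'
  rw [coroot, smul_smul, mul_inv_cancel₀ hd, one_smul]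

lemma star_α (i : Fin n) : star (α i : V n) = α i := by
  simp [α]

lemma star_coroot (i : Fin n) : star (C.coroot i) = C.coroot i := by
  simp [coroot, star_smul, star_α]

lemma sLin_apply (i : Fin n) (v : V n) : C.sLin i v = v - C.K (C.coroot i) v • α i := rfl

lemma s_apply (i : Fin n) (v : V n) : C.s i v = C.sLin i v := rfl

lemma K_sLin (i : Fin n) (x y : V n) : C.K (C.sLin i x) (C.sLin i y) = C.K x y := by
  have hα (z : V n) : C.K (α i) z = C.d i * C.K (C.coroot i) z := by
    rw [α_eq_smul_coroot, map_smul, LinearMap.smul_apply, smul_eq_mul]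
  have hαα : C.K (α i) (α i) = 2 * C.d i := by
    rw [K_α_α, C.diag]; push_cast; ring
  simp only [sLin_apply, map_sub, map_smul, LinearMap.sub_apply, LinearMap.smul_apply,
    smul_eq_mul, hαα, hα y, C.K_comm x (α i), hα x]
  ring

lemma star_sLin (i : Fin n) (v : V n) : star (C.sLin i v) = C.sLin i (star v) := by
  rw [sLin_apply, sLin_apply, star_sub, star_smul, star_α, ← K_star, star_coroot]

lemma sLin_δv (i : Fin n) : C.sLin i C.δv = C.δv := by
  rw [sLin_apply, K_δv_right, zero_smul, sub_zero]

lemma cox_induction {p : (V n ≃ₗ[ℂ] V n) → Prop} (one : p 1)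
    (mul : ∀ g h, p g → p h → p (g * h)) (s : ∀ i, p (C.s i)) : p C.cox :=
  List.prod_induction p mul one (List.forall_mem_ofFn_iff.mpr s)

lemma H_cox (x y : V n) : C.H (C.cox x) (C.cox y) = C.H x y := by
  revert x y
  refine C.cox_induction (p := fun g => ∀ x y, C.H (g x) (g y) = C.H x y)
    (fun x y => by simp) (fun g h hg hh x y => ?_) (fun i x y => ?_)
  · rw [LinearEquiv.mul_apply, LinearEquiv.mul_apply, hg, hh]
  · rw [H, H, s_apply, s_apply, star_sLin, K_sLin]

lemma cox_δv : C.cox C.δv = C.δv := by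
  refine C.cox_induction (p := fun g => g C.δv = C.δv) (by simp) (fun g h hg hh => ?_)
    (fun i => C.sLin_δv i)
  rw [LinearEquiv.mul_apply, hh, hg]

lemma sLin_apply_of_ne {i j : Fin n} (h : j ≠ i) (v : V n) : C.sLin i v j = v j := by
  simp [sLin_apply, α, h]

lemma sLin_apply_self (i : Fin n) (v : V n) : C.sLin i v i = v i - C.K (C.coroot i) v := by
  simp [sLin_apply, α]

lemma prod_map_s_apply_of_not_mem {l : List (Fin n)} {j : Fin n} (hj : j ∉ l) (v : V n) :
    (l.map C.s).prod v j = v j := by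
  induction l with
  | nil => simp
  | cons i l ih =>
    rw [List.mem_cons, not_or] at hj
    rw [List.map_cons, List.prod_cons, LinearEquiv.mul_apply, s_apply, sLin_apply_of_ne _ hj.1,
      ih hj.2]

lemma K_coroot_eq_zero_of_prod_map_s_apply_eq_self {l : List (Fin n)} (hl : l.Nodup) {v : V n}
    (hv : (l.map C.s).prod v = v) : ∀ i ∈ l, C.K (C.coroot i) v = 0 := by
  induction l with
  | nil => simp
  | cons i l ih =>
    obtain ⟨hil, hl⟩ := List.nodup_cons.mp hl
    rw [List.map_cons, List.prod_cons, LinearEquiv.mul_apply, s_apply] at hv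
    set w := (l.map C.s).prod v
    -- `s i` changes only the `i`-th coordinate, which the rest of the product leaves alone
    have hK : C.K (C.coroot i) w = 0 := by
      have hwi : w i = v i := C.prod_map_s_apply_of_not_mem hil v
      have := congrFun hv i
      rw [sLin_apply_self, hwi] at this
      exact sub_eq_self.mp this
    have hw : w = v := by rwa [sLin_apply, hK, zero_smul, sub_zero] at hv
    rintro j (_ | ⟨_, hj⟩)
    · rwa [← hw]
    · exact ih hl hw j hj

lemma mem_span_δv_of_cox_apply_eq_self {v : V n} (hv : C.cox v = v) : v ∈ ℂ ∙ C.δv := by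
  rw [cox, List.ofFn_eq_map] at hv
  have hK := C.K_coroot_eq_zero_of_prod_map_s_apply_eq_self (List.nodup_finRange n) hv
  have hflip : C.K.flip v = 0 := (Pi.basisFun ℂ (Fin n)).ext fun i => by
    rw [Pi.basisFun_apply, LinearMap.flip_apply, LinearMap.zero_apply]
    change C.K (α i) v = 0
    rw [α_eq_smul_coroot, map_smul, LinearMap.smul_apply, hK i (List.mem_finRange i), smul_zero]
  apply C.mem_span_δv_of_re_H_self_eq_zero
  rw [H, ← LinearMap.flip_apply, hflip, LinearMap.zero_apply, Complex.zero_re]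

def coxSubOne : Module.End ℂ (V n) := C.cox.toLinearMap - 1

lemma coxSubOne_apply (v : V n) : C.coxSubOne v = C.cox v - v := rfl

lemma ker_coxSubOne_le : LinearMap.ker C.coxSubOne ≤ ℂ ∙ C.δv :=
  fun _ hv => C.mem_span_δv_of_cox_apply_eq_self (sub_eq_zero.mp hv)

def rangeSq : Submodule ℂ (V n) := LinearMap.range (C.coxSubOne ^ 2)

lemma sub_two_le_finrank_rangeSq : n - 2 ≤ finrank ℂ C.rangeSq := by
  have hker : finrank ℂ (LinearMap.ker C.coxSubOne) ≤ 1 :=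
    (finrank_span_singleton (K := ℂ) C.δv_ne_zero).symm ▸ finrank_mono C.ker_coxSubOne_le
  have hcomp := LinearMap.finrank_ker_comp_le C.coxSubOne C.coxSubOne
  have hrank := (C.coxSubOne ^ 2).finrank_range_add_finrank_ker
  rw [pow_two, Module.End.mul_eq_comp, Module.finrank_fin_fun] at hrank
  rw [rangeSq, pow_two, Module.End.mul_eq_comp]
  omega

lemma cox_apply_mem_rangeSq {v : V n} (hv : v ∈ C.rangeSq) : C.cox v ∈ C.rangeSq := by
  obtain ⟨w, rfl⟩ := hv
  have hc : Commute C.cox.toLinearMap C.coxSubOne := (Commute.refl _).sub_right (.one_right _)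
  exact ⟨C.cox w, by simpa using LinearMap.congr_fun (hc.pow_right 2).eq.symm w⟩

lemma δv_not_mem_rangeSq : C.δv ∉ C.rangeSq := by
  rintro ⟨w, hw⟩
  set u := C.coxSubOne w
  have hcu : C.cox u = u + C.δv := by
    rw [← sub_eq_iff_eq_add', ← coxSubOne_apply, ← hw, pow_two, Module.End.mul_apply]
  have hcw : C.cox w = w + u := by rw [← sub_eq_iff_eq_add', ← coxSubOne_apply]
  -- `c` preserves `H`, and `δ` is `H`-orthogonal to everything
  have huu : C.H u u = 0 := by
    have := C.H_cox u w
    rw [hcu, hcw] at this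
    simpa [H, star_δv, K_δv_left] using this
  obtain ⟨z, hz⟩ := mem_span_singleton.mp
    (C.mem_span_δv_of_re_H_self_eq_zero (by rw [huu, Complex.zero_re]))
  rw [← hz, map_smul, cox_δv, left_eq_add] at hcu
  exact C.δv_ne_zero hcu

lemma eq_zero_of_mem_rangeSq_of_mem_span_δv {v : V n} (hW : v ∈ C.rangeSq)
    (hδ : v ∈ ℂ ∙ C.δv) : v = 0 :=
  (mem_bot ℂ).mp <| disjoint_iff_inf_le.mp
    (disjoint_span_singleton.mpr fun h => absurd h C.δv_not_mem_rangeSq) ⟨hW, hδ⟩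

lemma re_H_self_pos_of_mem_rangeSq {v : V n} (hv : v ∈ C.rangeSq) (hv0 : v ≠ 0) :
    0 < (C.H v v).re :=
  (C.re_H_self_nonneg v).lt_of_ne fun h =>
    hv0 (C.eq_zero_of_mem_rangeSq_of_mem_span_δv hv (C.mem_span_δv_of_re_H_self_eq_zero h.symm))

lemma re_H_smul_self (z : ℂ) (v : V n) :
    (C.H (z • v) (z • v)).re = ‖z‖ ^ 2 * (C.H v v).re := by
  simp only [H, star_smul, map_smul, LinearMap.smul_apply, smul_eq_mul, Complex.star_def,
    ← mul_assoc, Complex.mul_conj']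
  rw [← Complex.ofReal_pow, Complex.re_ofReal_mul]

lemma exists_mul_norm_sq_le_re_H :
    ∃ ε > 0, ∀ v ∈ C.rangeSq, ε * ‖v‖ ^ 2 ≤ (C.H v v).re := by
  have hcont : Continuous fun v : V n => (C.H v v).re := by
    simp only [H, K_apply]
    fun_prop
  obtain ⟨ε, hε, h⟩ := exists_pos_mul_norm_sq_le (𝕜 := ℂ) (E := C.rangeSq)
    (q := fun v => (C.H v v).re) (hcont.comp continuous_subtype_val)
    (fun z v => C.re_H_smul_self z v)
    (fun v hv => C.re_H_self_pos_of_mem_rangeSq v.2 (by simpa using hv))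
  exact ⟨ε, hε, fun v hv => h ⟨v, hv⟩⟩

def rootLattice (n : ℕ) : AddSubgroup (V n) :=
  (AddMonoidHom.compLeft (Int.castAddHom ℂ) (Fin n)).range

lemma finite_rootLattice_inter_closedBall (r : ℝ) :
    ((rootLattice n : Set (V n)) ∩ Metric.closedBall 0 r).Finite := by
  refine ((isCompact_closedBall (0 : Fin n → ℤ) r).finite_of_discrete.image
    (AddMonoidHom.compLeft (Int.castAddHom ℂ) (Fin n))).subset ?_
  rintro _ ⟨⟨z, rfl⟩, hz⟩
  refine ⟨z, ?_, rfl⟩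
  simpa [Pi.norm_def, Pi.nnnorm_def] using hz

lemma α_mem_rootLattice (i : Fin n) : α i ∈ rootLattice n :=
  ⟨Pi.single i 1, by ext j; simp [α, Pi.single_apply, apply_ite]⟩

lemma K_coroot_apply (i : Fin n) (v : V n) : C.K (C.coroot i) v = ∑ j, v j * C.a i j := by
  conv_lhs => rw [← (Pi.basisFun ℂ (Fin n)).sum_repr v]
  simp only [map_sum, map_smul, Pi.basisFun_repr, smul_eq_mul]
  refine Finset.sum_congr rfl fun j _ => ?_
  rw [Pi.basisFun_apply]
  exact congrArg (v j * ·) (C.K_coroot_α i j)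

lemma sLin_mem_rootLattice (i : Fin n) {v : V n} (hv : v ∈ rootLattice n) :
    C.sLin i v ∈ rootLattice n := by
  obtain ⟨z, rfl⟩ := hv
  have hK : C.K (C.coroot i) (AddMonoidHom.compLeft (Int.castAddHom ℂ) (Fin n) z) =
      ((∑ j, z j * C.a i j : ℤ) : ℂ) := by
    rw [K_coroot_apply]; push_cast; rfl
  rw [sLin_apply, hK, Int.cast_smul_eq_zsmul]
  exact sub_mem ⟨z, rfl⟩ (zsmul_mem (α_mem_rootLattice i) _)

lemma cox_mem_rootLattice {v : V n} (hv : v ∈ rootLattice n) : C.cox v ∈ rootLattice n := by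
  refine C.cox_induction (p := fun g => ∀ v ∈ rootLattice n, g v ∈ rootLattice n)
    (fun v hv => by simpa using hv) (fun g h hg hh v hv => ?_)
    (fun i v hv => C.sLin_mem_rootLattice i hv) v hv
  rw [LinearEquiv.mul_apply]
  exact hg _ (hh v hv)

lemma finite_range_pow_cox_apply {y : V n} (hyL : y ∈ rootLattice n) (hyW : y ∈ C.rangeSq) :
    (Set.range fun k : ℕ => (C.cox.toLinearMap ^ k) y).Finite := by
  obtain ⟨ε, hε, hcoer⟩ := C.exists_mul_norm_sq_le_re_H
  set T : Set (V n) := {v | v ∈ rootLattice n ∧ v ∈ C.rangeSq ∧ (C.H v v).re = (C.H y y).re}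
  have hT : Set.MapsTo C.cox T T := fun v ⟨hL, hW, hH⟩ =>
    ⟨C.cox_mem_rootLattice hL, C.cox_apply_mem_rangeSq hW, by rw [H_cox, hH]⟩
  refine (finite_rootLattice_inter_closedBall √((C.H y y).re / ε)).subset ?_
  rintro _ ⟨k, rfl⟩
  obtain ⟨hL, hW, hH⟩ := hT.iterate k ⟨hyL, hyW, rfl⟩
  show (C.cox.toLinearMap ^ k) y ∈ _
  rw [Module.End.pow_apply, LinearEquiv.coe_coe]
  refine ⟨hL, mem_closedBall_zero_iff.mpr (Real.le_sqrt_of_sq_le ?_)⟩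
  rw [le_div_iff₀ hε, mul_comm, ← hH]
  exact hcoer _ hW

lemma rangeSq_eq_span : C.rangeSq = span ℂ (Set.range fun j => (C.coxSubOne ^ 2) (α j)) := by
  rw [rangeSq, LinearMap.range_eq_map, ← (Pi.basisFun ℂ (Fin n)).span_eq, map_span,
    ← Set.range_comp]
  congr 2
  funext j
  simp [α]

lemma exists_pow_cox_eqOn_rangeSq :
    ∃ m, 0 < m ∧ ∀ x ∈ C.rangeSq, (C.cox.toLinearMap ^ m) x = x := by
  have hN {v : V n} (hv : v ∈ rootLattice n) : C.coxSubOne v ∈ rootLattice n :=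
    sub_mem (C.cox_mem_rootLattice hv) hv
  rw [rangeSq_eq_span]
  refine exists_pow_eqOn_span_of_finite_orbits C.cox.injective _ fun j =>
    C.finite_range_pow_cox_apply ?_ ⟨α j, rfl⟩
  rw [pow_two, Module.End.mul_apply]
  exact hN (hN (α_mem_rootLattice j))

def rootOfUnityEigenvectors : Set (V n) :=
  {v | ∃ μ : ℂ, C.cox v = μ • v ∧ μ ≠ 1 ∧ ∃ m : ℕ, 0 < m ∧ μ ^ m = 1}

lemma rangeSq_le_span_rootOfUnityEigenvectors :
    C.rangeSq ≤ span ℂ C.rootOfUnityEigenvectors := by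
  obtain ⟨m, hm, hper⟩ := C.exists_pow_cox_eqOn_rangeSq
  set f : Module.End ℂ C.rangeSq := C.cox.toLinearMap.restrict fun _ => C.cox_apply_mem_rangeSq
  have hf : f ^ m = 1 := LinearMap.ext fun x => Subtype.ext <| by
    rw [Module.End.pow_restrict, LinearMap.coe_restrict_apply, Module.End.one_apply]
    exact hper x x.2
  have htop := Module.End.iSup_eigenspace_eq_top_of_pow_eq_one (K := ℂ)
    (by exact_mod_cast hm.ne') hf
  intro x hx
  have hmem : (⟨x, hx⟩ : C.rangeSq) ∈ ⨆ μ, Module.End.eigenspace f μ := htop ▸ mem_top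
  refine iSup_induction _
    (motive := fun u : C.rangeSq => (u : V n) ∈ span ℂ C.rootOfUnityEigenvectors)
    hmem (fun μ u hu => ?_) (zero_mem _) (fun _ _ => add_mem)
  rcases eq_or_ne u 0 with rfl | hu0
  · exact zero_mem _
  have hcu : C.cox u = μ • u := congrArg Subtype.val (Module.End.mem_eigenspace_iff.mp hu)
  refine subset_span ⟨μ, hcu, fun hμ => hu0 ?_, m, hm, End.HasEigenvector.pow_eq_one ⟨hu, hu0⟩ hf⟩
  rw [hμ, one_smul] at hcu
  exact Subtype.ext <|
    C.eq_zero_of_mem_rangeSq_of_mem_span_δv u.2 (C.mem_span_δv_of_cox_apply_eq_self hcu)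

/-- Proposition 3.1(3): `c` has a linearly independent set of `n - 2` eigenvectors
whose eigenvalues are roots of unity different from `1`. -/
theorem eigenvectors_roots_of_unity {n : ℕ} (C : AffineGCM n) :
    ∃ (v : Fin (n - 2) → V n) (μ : Fin (n - 2) → ℂ), LinearIndependent ℂ v ∧
      ∀ i, C.cox (v i) = μ i • v i ∧ μ i ≠ 1 ∧ ∃ m : ℕ, 0 < m ∧ μ i ^ m = 1 := by
  have hdim : n - 2 ≤ finrank ℂ (span ℂ C.rootOfUnityEigenvectors) :=
    C.sub_two_le_finrank_rangeSq.trans (finrank_mono C.rangeSq_le_span_rootOfUnityEigenvectors)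
  obtain ⟨b, hb, -, hli⟩ := exists_fun_fin_finrank_span_eq ℂ C.rootOfUnityEigenvectors
  choose μ hμ using fun i => hb (Fin.castLE hdim i)
  exact ⟨b ∘ Fin.castLE hdim, μ, hli.comp _ (Fin.castLE_injective hdim), hμ⟩

end AffineGCM
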